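/- arXiv:2208.04533 — 4 statements merged into one kernel-verified Lean document; each statement's English description precedes it below -/
import Mathlib

section
/- Let A be an I-modal ririg and θ a congruence on A. Then the equivalence class F_θ = {x ∈ A : (x,1) ∈ θ} of 1 is an I-filter of A. -/
/-- An integral residuated rig (ririg). -/
class Ririg (A : Type*) extends CommMonoid A, SemilatticeSup A, OrderBot A, OrderTop A, HImp A where
  one_eq_top : (1 : A) = ⊤
  mul_sup : ∀ x y z : A, x * (y ⊔ z) = x * y ⊔ x * z
  mul_bot : ∀ x : A, x * ⊥ = ⊥
  residuation : ∀ a b c : A, a * b ≤ c ↔ a ≤ b ⇨ c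

/-- A modal operator on a ririg. -/
def IsModal {A : Type*} [Ririg A] (m : A → A) : Prop :=
  m 1 = 1 ∧ ∀ x y : A, m (x ⇨ y) ≤ m x ⇨ m y

/-- Interpretation of an I-block (finite composition of modal operators). -/
def blockApp {A ι : Type*} (f : ι → A → A) : List ι → A → A
  | [] => id
  | i :: L => f i ∘ blockApp f L

/-- I-filter. -/
def IsIFilter {A ι : Type*} [Ririg A] (f : ι → A → A) (F : Set A) : Prop :=
  F.Nonempty ∧ (∀ x y : A, x ∈ F → x ≤ y → y ∈ F) ∧
    (∀ x y : A, x ∈ F → y ∈ F → x * y ∈ F) ∧ (∀ i : ι, ∀ x : A, x ∈ F → f i x ∈ F)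

/-- Congruence of an I-modal ririg. -/
def IsRirigCon {A ι : Type*} [Ririg A] (f : ι → A → A) (θ : A → A → Prop) : Prop :=
  Equivalence θ ∧
    (∀ a b c d : A, θ a b → θ c d → θ (a ⊔ c) (b ⊔ d)) ∧
    (∀ a b c d : A, θ a b → θ c d → θ (a * c) (b * d)) ∧
    (∀ a b c d : A, θ a b → θ c d → θ (a ⇨ c) (b ⇨ d)) ∧
    (∀ i : ι, ∀ a b : A, θ a b → θ (f i a) (f i b))

theorem Ririg.sup_one {A : Type*} [Ririg A] (y : A) : y ⊔ 1 = 1 := by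
  rw [Ririg.one_eq_top, sup_top_eq]

namespace IsRirigCon

variable {A ι : Type*} [Ririg A] {f : ι → A → A} {θ : A → A → Prop}

theorem rel_one_of_le (hθ : IsRirigCon f θ) {x y : A} (hx : θ x 1) (hxy : x ≤ y) : θ y 1 := by
  have h := hθ.2.1 y y x 1 (hθ.1.refl y) hx
  rwa [sup_eq_left.mpr hxy, Ririg.sup_one] at h

theorem rel_one_mul (hθ : IsRirigCon f θ) {x y : A} (hx : θ x 1) (hy : θ y 1) :
    θ (x * y) 1 := by
  simpa only [one_mul] using hθ.2.2.1 x 1 y 1 hx hy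

theorem rel_one_map (hθ : IsRirigCon f θ) {i : ι} (hi : f i 1 = 1) {x : A} (hx : θ x 1) :
    θ (f i x) 1 := by
  simpa only [hi] using hθ.2.2.2.2 i x 1 hx

end IsRirigCon

theorem stmt7 {A ι : Type*} [Ririg A] (f : ι → A → A) (hf : ∀ i, IsModal (f i))
    (θ : A → A → Prop) (hθ : IsRirigCon f θ) :
    IsIFilter f {x : A | θ x 1} :=
  ⟨⟨1, hθ.1.refl 1⟩, fun _ _ hx hxy => hθ.rel_one_of_le hx hxy,
    fun _ _ hx hy => hθ.rel_one_mul hx hy, fun i _ hx => hθ.rel_one_map (hf i).1 hx⟩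
end

section
/- Let A be an I-modal ririg and F an I-filter. Define x ∗ y = (x → y)·(y → x). Then the relation θ_F = {(x,y) ∈ A² : x ∗ y ∈ F} is a congruence on A (i.e., an equivalence relation compatible with ∨, ·, →, and each modal operator m ∈ I). -/
/-!
Since `F` is an up-set closed under products and every element lies below `1`, `x ∗ y ∈ F` holds
exactly when both `x ⇨ y` and `y ⇨ x` lie in `F`. Each compatibility is then one residuation
inequality `(a ⇨ b) * (c ⇨ d) ≤ (a ⋆ c) ⇨ (b ⋆ d)` for the operation `⋆` in question (with the
first factor reversed for `⇨`), and for a modal operator the inequality `m (x ⇨ y) ≤ m x ⇨ m y`.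
-/

namespace Ririg

variable {A : Type*} [Ririg A]

instance : IsOrderedMonoid A where
  mul_le_mul_left a b hab c := by
    rw [mul_comm a, mul_comm b, ← sup_eq_right.mpr hab, Ririg.mul_sup]
    exact le_sup_left

theorem le_one (a : A) : a ≤ 1 :=
  Ririg.one_eq_top (A := A) ▸ le_top

theorem himp_self (a : A) : a ⇨ a = 1 :=
  le_antisymm (le_one _) ((Ririg.residuation _ _ _).mp (one_mul a).le)

theorem himp_mul_le (a b : A) : (a ⇨ b) * a ≤ b :=
  (Ririg.residuation _ _ _).mpr le_rfl

theorem himp_mul_himp_le_himp {a b c : A} : (a ⇨ b) * (b ⇨ c) ≤ a ⇨ c := by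
  refine (Ririg.residuation _ _ _).mp ?_
  calc (a ⇨ b) * (b ⇨ c) * a = (b ⇨ c) * ((a ⇨ b) * a) := by ac_rfl
    _ ≤ (b ⇨ c) * b := mul_le_mul_right (himp_mul_le a b) _
    _ ≤ c := himp_mul_le b c

theorem himp_mul_himp_le_sup_himp_sup {a b c d : A} :
    (a ⇨ b) * (c ⇨ d) ≤ a ⊔ c ⇨ b ⊔ d := by
  refine (Ririg.residuation _ _ _).mp ?_
  rw [Ririg.mul_sup]
  refine sup_le ?_ ?_
  · calc (a ⇨ b) * (c ⇨ d) * a = (c ⇨ d) * ((a ⇨ b) * a) := by ac_rfl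
      _ ≤ b := mul_le_of_le_one_left' (le_one _) |>.trans (himp_mul_le a b)
      _ ≤ b ⊔ d := le_sup_left
  · calc (a ⇨ b) * (c ⇨ d) * c = (a ⇨ b) * ((c ⇨ d) * c) := by ac_rfl
      _ ≤ d := mul_le_of_le_one_left' (le_one _) |>.trans (himp_mul_le c d)
      _ ≤ b ⊔ d := le_sup_right

theorem himp_mul_himp_le_mul_himp_mul {a b c d : A} :
    (a ⇨ b) * (c ⇨ d) ≤ a * c ⇨ b * d := by
  refine (Ririg.residuation _ _ _).mp ?_
  calc (a ⇨ b) * (c ⇨ d) * (a * c) = ((a ⇨ b) * a) * ((c ⇨ d) * c) := by ac_rfl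
    _ ≤ b * d := mul_le_mul' (himp_mul_le a b) (himp_mul_le c d)

theorem himp_mul_himp_le_himp_himp {a b c d : A} :
    (b ⇨ a) * (c ⇨ d) ≤ (a ⇨ c) ⇨ (b ⇨ d) := by
  refine (Ririg.residuation _ _ _).mp <| (Ririg.residuation _ _ _).mp ?_
  calc (b ⇨ a) * (c ⇨ d) * (a ⇨ c) * b = (c ⇨ d) * ((a ⇨ c) * ((b ⇨ a) * b)) := by ac_rfl
    _ ≤ (c ⇨ d) * ((a ⇨ c) * a) := mul_le_mul_right (mul_le_mul_right (himp_mul_le b a) _) _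
    _ ≤ (c ⇨ d) * c := mul_le_mul_right (himp_mul_le a c) _
    _ ≤ d := himp_mul_le c d

end Ririg

namespace IsIFilter

open Ririg

variable {A ι : Type*} [Ririg A] {f : ι → A → A} {F : Set A} {x y z : A}

theorem mem_of_le (hF : IsIFilter f F) (hx : x ∈ F) (h : x ≤ y) : y ∈ F :=
  hF.2.1 x y hx h

theorem mul_mem (hF : IsIFilter f F) (hx : x ∈ F) (hy : y ∈ F) : x * y ∈ F :=
  hF.2.2.1 x y hx hy

theorem apply_mem (hF : IsIFilter f F) (i : ι) (hx : x ∈ F) : f i x ∈ F :=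
  hF.2.2.2 i x hx

theorem one_mem (hF : IsIFilter f F) : (1 : A) ∈ F :=
  hF.1.elim fun _ hx => hF.mem_of_le hx (le_one _)

theorem mem_of_mul_le (hF : IsIFilter f F) (hx : x ∈ F) (hy : y ∈ F) (h : x * y ≤ z) : z ∈ F :=
  hF.mem_of_le (hF.mul_mem hx hy) h

theorem himp_mul_himp_mem_iff (hF : IsIFilter f F) :
    (x ⇨ y) * (y ⇨ x) ∈ F ↔ x ⇨ y ∈ F ∧ y ⇨ x ∈ F :=
  ⟨fun h => ⟨hF.mem_of_le h (mul_le_of_le_one_right' (le_one _)),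
      hF.mem_of_le h (mul_le_of_le_one_left' (le_one _))⟩,
    fun h => hF.mul_mem h.1 h.2⟩

theorem isRirigCon_himp_mem_and (hf : ∀ i, IsModal (f i)) (hF : IsIFilter f F) :
    IsRirigCon f (fun x y : A => x ⇨ y ∈ F ∧ y ⇨ x ∈ F) := by
  have refl (a : A) : a ⇨ a ∈ F := himp_self a ▸ hF.one_mem
  refine ⟨⟨fun a => ⟨refl a, refl a⟩, And.symm, fun hab hbc => ?trans⟩, ?sup, ?mul, ?himp, ?modal⟩
  case trans =>
    exact ⟨hF.mem_of_mul_le hab.1 hbc.1 himp_mul_himp_le_himp,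
      hF.mem_of_mul_le hbc.2 hab.2 himp_mul_himp_le_himp⟩
  case sup =>
    exact fun _ _ _ _ hab hcd => ⟨hF.mem_of_mul_le hab.1 hcd.1 himp_mul_himp_le_sup_himp_sup,
      hF.mem_of_mul_le hab.2 hcd.2 himp_mul_himp_le_sup_himp_sup⟩
  case mul =>
    exact fun _ _ _ _ hab hcd => ⟨hF.mem_of_mul_le hab.1 hcd.1 himp_mul_himp_le_mul_himp_mul,
      hF.mem_of_mul_le hab.2 hcd.2 himp_mul_himp_le_mul_himp_mul⟩
  case himp =>
    exact fun _ _ _ _ hab hcd => ⟨hF.mem_of_mul_le hab.2 hcd.1 himp_mul_himp_le_himp_himp,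
      hF.mem_of_mul_le hab.1 hcd.2 himp_mul_himp_le_himp_himp⟩
  case modal =>
    exact fun i a b hab => ⟨hF.mem_of_le (hF.apply_mem i hab.1) ((hf i).2 a b),
      hF.mem_of_le (hF.apply_mem i hab.2) ((hf i).2 b a)⟩

end IsIFilter

theorem stmt8 {A ι : Type*} [Ririg A] (f : ι → A → A) (hf : ∀ i, IsModal (f i))
    (F : Set A) (hF : IsIFilter f F) :
    IsRirigCon f (fun x y : A => (x ⇨ y) * (y ⇨ x) ∈ F) := by
  have hθ : (fun x y : A => (x ⇨ y) * (y ⇨ x) ∈ F) = fun x y => x ⇨ y ∈ F ∧ y ⇨ x ∈ F :=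
    funext₂ fun _ _ => propext hF.himp_mul_himp_mem_iff
  exact hθ ▸ hF.isRirigCon_himp_mem_and hf
end

section
/- Let A be an I-modal ririg with I finite and F ⊆ A. Then F is an I-filter if and only if F is a nonempty up-set closed under multiplication and closed under the single operation λ(x) = x · ∏_{m∈I} m(x). -/
/-! In an integral rig every element lies below `1 = ⊤`, so `x * ∏ m, m x ≤ m x` for each `m`:
an up-set closed under `x ↦ x * ∏ m, m x` is closed under every `m`. Conversely a nonempty up-set
contains `1`, so an I-filter contains the whole product. -/

section Ririg

variable {A : Type*} [Ririg A]

theorem Ririg.mul_le_mul_of_le_right {y z : A} (h : y ≤ z) (x : A) : x * y ≤ x * z := by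
  rw [← sup_eq_right.mpr h, Ririg.mul_sup]
  exact le_sup_left

instance Ririg.toIsOrderedMonoid : IsOrderedMonoid A where
  mul_le_mul_left y z h x := by
    simpa only [mul_comm _ x] using Ririg.mul_le_mul_of_le_right h x

theorem Ririg.le_one_s12 (a : A) : a ≤ 1 :=
  one_eq_top (A := A) ▸ le_top

theorem Ririg.prod_le_of_mem {ι : Type*} [DecidableEq ι] {s : Finset ι} {i : ι} (hi : i ∈ s)
    (g : ι → A) : ∏ j ∈ s, g j ≤ g i := by
  rw [← Finset.mul_prod_erase s g hi]
  exact mul_le_of_le_one_right' (Finset.prod_le_one' fun j _ => le_one_s12 (g j))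

end Ririg

theorem stmt12_general {A ι : Type*} [Ririg A] [Fintype ι] (f : ι → A → A)
    (F : Set A) :
    IsIFilter f F ↔
      (F.Nonempty ∧ (∀ x y : A, x ∈ F → x ≤ y → y ∈ F) ∧
        (∀ x y : A, x ∈ F → y ∈ F → x * y ∈ F) ∧
        (∀ x : A, x ∈ F → x * ∏ i : ι, f i x ∈ F)) := by
  refine ⟨fun ⟨hne, hup, hmul, hmod⟩ => ⟨hne, hup, hmul, fun x hx => ?_⟩,
    fun ⟨hne, hup, hmul, hlam⟩ => ⟨hne, hup, hmul, fun i x hx => ?_⟩⟩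
  · have one_mem : (1 : A) ∈ F := hne.elim fun a ha => hup a 1 ha (Ririg.le_one_s12 a)
    exact hmul x _ hx <|
      Finset.prod_induction _ (· ∈ F) hmul one_mem fun i _ => hmod i x hx
  · classical
    refine hup _ _ (hlam x hx) ?_
    calc x * ∏ j, f j x ≤ ∏ j, f j x := mul_le_of_le_one_left' (Ririg.le_one_s12 x)
      _ ≤ f i x := Ririg.prod_le_of_mem (Finset.mem_univ i) (f · x)

theorem stmt12 {A ι : Type*} [Ririg A] [Fintype ι] (f : ι → A → A)
    (hf : ∀ i, IsModal (f i)) (F : Set A) :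
    IsIFilter f F ↔
      (F.Nonempty ∧ (∀ x y : A, x ∈ F → x ≤ y → y ∈ F) ∧
        (∀ x y : A, x ∈ F → y ∈ F → x * y ∈ F) ∧
        (∀ x : A, x ∈ F → x * ∏ i : ι, f i x ∈ F)) :=
  stmt12_general f F
end

section
/- Let A be an I-modal ririg in which every modal operator m is contractive (m(x) ≤ x) and satisfies m(a ∨ b) ≤ m(a) ∨ m(b). Then for any two I-blocks M, N (finite compositions of modal operators) there exists an I-block Q such that Q(a ∨ b) ≤ M(a) ∨ N(b) for all a, b ∈ A. -/
/- Blocks of contractive, join-subadditive monotone operators are again such operators, and for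
any two of them `M`, `N` the composite block `M ∘ N` does the job: since `N` is contractive,
`N (a ⊔ b) ≤ N a ⊔ N b ≤ a ⊔ N b`, and applying `M`, which is contractive on `N b`, gives
`M (N (a ⊔ b)) ≤ M a ⊔ N b`. -/

theorem Ririg.himp_eq_one_of_le {A : Type*} [Ririg A] {x y : A} (h : x ≤ y) : x ⇨ y = 1 := by
  refine le_antisymm (by rw [Ririg.one_eq_top]; exact le_top) ?_
  rw [← Ririg.residuation, one_mul]
  exact h

theorem IsModal.monotone {A : Type*} [Ririg A] {m : A → A} (hm : IsModal m) : Monotone m := by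
  intro x y hxy
  have h : (1 : A) ≤ m x ⇨ m y := by
    calc (1 : A) = m (x ⇨ y) := by rw [Ririg.himp_eq_one_of_le hxy, hm.1]
      _ ≤ m x ⇨ m y := hm.2 x y
  simpa only [one_mul] using (Ririg.residuation 1 (m x) (m y)).mpr h

theorem comp_sup_le_sup {α : Type*} [SemilatticeSup α] {g h : α → α} (hg : Monotone g)
    (hg_sup : ∀ a b, g (a ⊔ b) ≤ g a ⊔ g b) (hg_le : ∀ x, g x ≤ x)
    (hh_sup : ∀ a b, h (a ⊔ b) ≤ h a ⊔ h b) (hh_le : ∀ x, h x ≤ x) (a b : α) :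
    g (h (a ⊔ b)) ≤ g a ⊔ h b :=
  calc g (h (a ⊔ b)) ≤ g (a ⊔ h b) := hg ((hh_sup a b).trans (sup_le_sup_right (hh_le a) _))
    _ ≤ g a ⊔ g (h b) := hg_sup a (h b)
    _ ≤ g a ⊔ h b := sup_le_sup_left (hg_le (h b)) _

section blockApp

variable {α ι : Type*} {f : ι → α → α}

theorem blockApp_append (L K : List ι) : blockApp f (L ++ K) = blockApp f L ∘ blockApp f K := by
  induction L with
  | nil => rfl
  | cons i L ih => simp only [List.cons_append, blockApp, ih, Function.comp_assoc]

theorem monotone_blockApp [Preorder α] (hmono : ∀ i, Monotone (f i)) (L : List ι) :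
    Monotone (blockApp f L) := by
  induction L with
  | nil => exact monotone_id
  | cons i L ih => exact (hmono i).comp ih

theorem blockApp_le [Preorder α] (hle : ∀ i x, f i x ≤ x) (L : List ι) (x : α) :
    blockApp f L x ≤ x := by
  induction L with
  | nil => exact le_rfl
  | cons i L ih => exact (hle i _).trans ih

theorem blockApp_sup_le [SemilatticeSup α] (hmono : ∀ i, Monotone (f i))
    (hsup : ∀ i a b, f i (a ⊔ b) ≤ f i a ⊔ f i b) (L : List ι) (a b : α) :
    blockApp f L (a ⊔ b) ≤ blockApp f L a ⊔ blockApp f L b := by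
  induction L with
  | nil => exact le_rfl
  | cons i L ih => exact ((hmono i) ih).trans (hsup i _ _)

end blockApp

theorem stmt15 {A ι : Type*} [Ririg A] (f : ι → A → A) (hf : ∀ i, IsModal (f i))
    (hcon : ∀ (i : ι) (x : A), f i x ≤ x)
    (hsup : ∀ (i : ι) (a b : A), f i (a ⊔ b) ≤ f i a ⊔ f i b) :
    ∀ M N : List ι, ∃ Q : List ι, ∀ a b : A,
      blockApp f Q (a ⊔ b) ≤ blockApp f M a ⊔ blockApp f N b := by
  intro M N
  have hmono : ∀ i, Monotone (f i) := fun i => (hf i).monotone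
  refine ⟨M ++ N, fun a b => ?_⟩
  rw [blockApp_append]
  exact comp_sup_le_sup (monotone_blockApp hmono M) (blockApp_sup_le hmono hsup M)
    (blockApp_le hcon M) (blockApp_sup_le hmono hsup N) (blockApp_le hcon N) a b
end
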